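/- In the online performative prediction setting, let (x_1, …, x_t) and (x̃_1, …, x̃_t) be two decision sequences in 𝒳 with corresponding data distributions p_t and p̃_t (both generated from the same p_1 by p_{s+1} = ρ p_s + (1−ρ) D(x_s)). Suppose l_t : 𝒳 × ℝ^d → [0,1] is L₀-Lipschitz in each argument. Then |E_{z ∼ p_t}[l_t(x_t, z)] − E_{z ∼ p̃_t}[l_t(x̃_t, z)]| ≤ L₀ ‖x_t − x̃_t‖₂ + L₀ (1−ρ) ‖F‖₂ Σ_{k=1}^{t−1} ρ^{k−1} ‖x_{t−k} − x̃_{t−k}‖₂. -/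

import Mathlib

/-!
A bounded Lipschitz loss integrates against one step of the dynamics as
`ρ ∫ g dp_s + (1 - ρ) ∫ g(z + F x_s) dν(z)`, so the gap between the two expected losses
contracts by `ρ` and picks up at most `(1 - ρ) L₀ ‖F‖₂ ‖x_s - x̃_s‖` from the translated
component. Unrolling this recursion from the common start `p_1` gives the geometric sum;
the remaining term `L₀ ‖x_t - x̃_t‖` comes from changing the decision in the loss itself.
-/

open MeasureTheory

/-- Spectral norm (ℓ²-operator norm) of a real square matrix. -/
noncomputable def spec17 {d : ℕ} (M : Matrix (Fin d) (Fin d) ℝ) : ℝ :=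
  ‖Matrix.toEuclideanCLM (𝕜 := ℝ) M‖

/-- A square matrix acting on Euclidean space. -/
noncomputable def mv17 {d : ℕ} (M : Matrix (Fin d) (Fin d) ℝ) (v : EuclideanSpace ℝ (Fin d)) :
    EuclideanSpace ℝ (Fin d) :=
  Matrix.toEuclideanCLM (𝕜 := ℝ) M v

theorem Finset.sum_Icc_one_eq_sum_range {M : Type*} [AddCommMonoid M] (f : ℕ → M) (n : ℕ) :
    ∑ k ∈ Finset.Icc 1 n, f k = ∑ k ∈ Finset.range n, f (k + 1) := by
  rw [Finset.range_eq_Ico, Finset.sum_Ico_add', ← Finset.Ico_add_one_right_eq_Icc]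

theorem le_sum_pow_mul_of_le_mul_add {e c : ℕ → ℝ} {ρ : ℝ} (hρ : 0 ≤ ρ) (h1 : e 1 ≤ 0)
    (hstep : ∀ s, 1 ≤ s → e (s + 1) ≤ ρ * e s + c s) {t : ℕ} (ht : 1 ≤ t) :
    e t ≤ ∑ k ∈ Finset.Icc 1 (t - 1), ρ ^ (k - 1) * c (t - k) := by
  obtain ⟨n, rfl⟩ := Nat.exists_eq_add_of_le' ht
  simp only [Nat.add_sub_cancel, Finset.sum_Icc_one_eq_sum_range, Nat.add_sub_add_right]
  clear ht
  induction n with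
  | zero => simpa using h1
  | succ n ih =>
    calc e (n + 1 + 1) ≤ ρ * e (n + 1) + c (n + 1) := hstep _ (Nat.le_add_left 1 n)
      _ ≤ ρ * ∑ k ∈ Finset.range n, ρ ^ k * c (n - k) + c (n + 1) := by gcongr
      _ = ∑ k ∈ Finset.range (n + 1), ρ ^ k * c (n + 1 - k) := by
        rw [Finset.sum_range_succ', Finset.mul_sum]
        simp [pow_succ, mul_assoc, mul_comm]

section Mixture

variable {E : Type*} [MeasurableSpace E]

theorem isProbabilityMeasure_ofReal_smul_add_ofReal_one_sub_smul {a : ℝ} (ha0 : 0 ≤ a)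
    (ha1 : a ≤ 1) (μ η : Measure E) [IsProbabilityMeasure μ] [IsProbabilityMeasure η] :
    IsProbabilityMeasure (ENNReal.ofReal a • μ + ENNReal.ofReal (1 - a) • η) := by
  constructor
  simp [← ENNReal.ofReal_add ha0 (sub_nonneg.2 ha1)]

theorem integral_ofReal_smul_add_ofReal_smul {a b : ℝ} (ha : 0 ≤ a) (hb : 0 ≤ b)
    {μ η : Measure E} {g : E → ℝ} (hμ : Integrable g μ) (hη : Integrable g η) :
    ∫ z, g z ∂(ENNReal.ofReal a • μ + ENNReal.ofReal b • η)
      = a * ∫ z, g z ∂μ + b * ∫ z, g z ∂η := by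
  rw [integral_add_measure (hμ.smul_measure ENNReal.ofReal_ne_top)
    (hη.smul_measure ENNReal.ofReal_ne_top), integral_smul_measure, integral_smul_measure,
    ENNReal.toReal_ofReal ha, ENNReal.toReal_ofReal hb, smul_eq_mul, smul_eq_mul]

theorem abs_integral_sub_integral_le {μ : Measure E} [IsProbabilityMeasure μ] {f g : E → ℝ}
    (hf : Integrable f μ) (hg : Integrable g μ) {C : ℝ} (hfg : ∀ z, |f z - g z| ≤ C) :
    |∫ z, f z ∂μ - ∫ z, g z ∂μ| ≤ C := by
  rw [← integral_sub hf hg, ← Real.norm_eq_abs]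
  simpa using
    norm_integral_le_of_norm_le_const (μ := μ) (f := fun z => f z - g z) (.of_forall hfg)

end Mixture

section Lipschitz

variable {E : Type*} [NormedAddCommGroup E] [MeasurableSpace E] [OpensMeasurableSpace E]
  {K : NNReal} {C : ℝ} {g : E → ℝ}

theorem Continuous.integrable_of_abs_le (hg : Continuous g) (hgC : ∀ z, |g z| ≤ C)
    (μ : Measure E) [IsFiniteMeasure μ] : Integrable g μ :=
  .of_bound hg.aestronglyMeasurable C (.of_forall hgC)

variable {ν : Measure E} [IsProbabilityMeasure ν]

theorem LipschitzWith.abs_integral_comp_add_sub_le (hg : LipschitzWith K g)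
    (hgC : ∀ z, |g z| ≤ C) (u v : E) :
    |∫ z, g (z + u) ∂ν - ∫ z, g (z + v) ∂ν| ≤ K * ‖u - v‖ := by
  have hint (w : E) : Integrable (fun z => g (z + w)) ν :=
    (hg.continuous.comp (continuous_add_const w)).integrable_of_abs_le (fun _ => hgC _) ν
  refine abs_integral_sub_integral_le (hint u) (hint v) fun z => ?_
  simpa [← dist_eq_norm, Real.dist_eq] using hg.dist_le_mul (z + u) (z + v)

theorem LipschitzWith.abs_integral_mix_map_add_sub_le [MeasurableAdd E] (hg : LipschitzWith K g)
    (hgC : ∀ z, |g z| ≤ C) {ρ : ℝ} (hρ0 : 0 ≤ ρ) (hρ1 : ρ ≤ 1)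
    (μ μ' : Measure E) [IsProbabilityMeasure μ] [IsProbabilityMeasure μ'] (u u' : E) :
    |∫ z, g z ∂(ENNReal.ofReal ρ • μ + ENNReal.ofReal (1 - ρ) • ν.map (· + u))
        - ∫ z, g z ∂(ENNReal.ofReal ρ • μ' + ENNReal.ofReal (1 - ρ) • ν.map (· + u'))|
      ≤ ρ * |∫ z, g z ∂μ - ∫ z, g z ∂μ'| + (1 - ρ) * (K * ‖u - u'‖) := by
  have hint (η : Measure E) [IsFiniteMeasure η] := hg.continuous.integrable_of_abs_le hgC η
  have hmap (w : E) : ∫ z, g z ∂(ν.map (· + w)) = ∫ z, g (z + w) ∂ν :=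
    integral_map (measurable_add_const w).aemeasurable hg.continuous.aestronglyMeasurable
  have h1ρ : 0 ≤ 1 - ρ := sub_nonneg.2 hρ1
  rw [integral_ofReal_smul_add_ofReal_smul hρ0 h1ρ (hint μ) (hint _),
    integral_ofReal_smul_add_ofReal_smul hρ0 h1ρ (hint μ') (hint _), hmap, hmap]
  calc _ = |ρ * (∫ z, g z ∂μ - ∫ z, g z ∂μ')
          + (1 - ρ) * (∫ z, g (z + u) ∂ν - ∫ z, g (z + u') ∂ν)| := by ring_nf
    _ ≤ ρ * |∫ z, g z ∂μ - ∫ z, g z ∂μ'|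
          + (1 - ρ) * |∫ z, g (z + u) ∂ν - ∫ z, g (z + u') ∂ν| := by
      grw [abs_add_le, abs_mul, abs_mul, abs_of_nonneg hρ0, abs_of_nonneg h1ρ]
    _ ≤ _ := by grw [hg.abs_integral_comp_add_sub_le hgC]

end Lipschitz

section Dynamics

variable {E : Type*} [NormedAddCommGroup E] [MeasurableSpace E] [MeasurableAdd E]
  {ν : Measure E} [IsProbabilityMeasure ν] {ρ : ℝ} {u : ℕ → E} {p : ℕ → Measure E}

theorem isProbabilityMeasure_of_mix_map_add_rec (hρ0 : 0 ≤ ρ) (hρ1 : ρ ≤ 1)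
    (hp1 : IsProbabilityMeasure (p 1))
    (hrec : ∀ s, 1 ≤ s → p (s + 1) = ENNReal.ofReal ρ • p s
      + ENNReal.ofReal (1 - ρ) • ν.map (· + u s)) {s : ℕ} (hs : 1 ≤ s) :
    IsProbabilityMeasure (p s) := by
  induction s, hs using Nat.le_induction with
  | base => exact hp1
  | succ s hs ih =>
    have := Measure.isProbabilityMeasure_map (μ := ν) (measurable_add_const (u s)).aemeasurable
    rw [hrec s hs]
    exact isProbabilityMeasure_ofReal_smul_add_ofReal_one_sub_smul hρ0 hρ1 _ _

theorem LipschitzWith.abs_integral_sub_le_of_mix_map_add_rec [OpensMeasurableSpace E]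
    {K : NNReal} {C : ℝ} {g : E → ℝ} (hg : LipschitzWith K g) (hgC : ∀ z, |g z| ≤ C)
    (hρ0 : 0 ≤ ρ) (hρ1 : ρ ≤ 1)
    {u' : ℕ → E} {p' : ℕ → Measure E} (hp1 : IsProbabilityMeasure (p 1)) (hp'1 : p' 1 = p 1)
    (hrec : ∀ s, 1 ≤ s → p (s + 1) = ENNReal.ofReal ρ • p s
      + ENNReal.ofReal (1 - ρ) • ν.map (· + u s))
    (hrec' : ∀ s, 1 ≤ s → p' (s + 1) = ENNReal.ofReal ρ • p' s
      + ENNReal.ofReal (1 - ρ) • ν.map (· + u' s)) {t : ℕ} (ht : 1 ≤ t) :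
    |∫ z, g z ∂(p t) - ∫ z, g z ∂(p' t)|
      ≤ ∑ k ∈ Finset.Icc 1 (t - 1), ρ ^ (k - 1) * ((1 - ρ) * (K * ‖u (t - k) - u' (t - k)‖)) := by
  refine le_sum_pow_mul_of_le_mul_add (e := fun s => |∫ z, g z ∂(p s) - ∫ z, g z ∂(p' s)|)
    (c := fun s => (1 - ρ) * (K * ‖u s - u' s‖)) hρ0 (by simp [hp'1]) (fun s hs => ?_) ht
  have := isProbabilityMeasure_of_mix_map_add_rec hρ0 hρ1 hp1 hrec hs
  have := isProbabilityMeasure_of_mix_map_add_rec hρ0 hρ1 (hp'1 ▸ hp1) hrec' hs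
  rw [hrec s hs, hrec' s hs]
  exact hg.abs_integral_mix_map_add_sub_le hgC hρ0 hρ1 _ _ _ _

end Dynamics

theorem norm_mv17_sub_le {d : ℕ} (M : Matrix (Fin d) (Fin d) ℝ) (v w : EuclideanSpace ℝ (Fin d)) :
    ‖mv17 M v - mv17 M w‖ ≤ spec17 M * ‖v - w‖ := by
  simpa only [mv17, spec17, map_sub] using (Matrix.toEuclideanCLM (𝕜 := ℝ) M).le_opNorm (v - w)

theorem stmt_17_general
    (d t : ℕ) (ht : 1 ≤ t) (ρ L0 : ℝ) (hρ : ρ ∈ Set.Ioo (0:ℝ) 1) (hL0 : 0 ≤ L0)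
    (F : Matrix (Fin d) (Fin d) ℝ)
    (ν p1 : Measure (EuclideanSpace ℝ (Fin d)))
    (hν : IsProbabilityMeasure ν) (hp1 : IsProbabilityMeasure p1)
    (l : EuclideanSpace ℝ (Fin d) → EuclideanSpace ℝ (Fin d) → ℝ)
    (hl01 : ∀ x z, l x z ∈ Set.Icc (0:ℝ) 1)
    (hlip1 : ∀ z x x', |l x z - l x' z| ≤ L0 * ‖x - x'‖)
    (hlip2 : ∀ x z z', |l x z - l x z'| ≤ L0 * ‖z - z'‖)
    (x xtil : ℕ → EuclideanSpace ℝ (Fin d))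
    (p ptil : ℕ → Measure (EuclideanSpace ℝ (Fin d)))
    (hpinit : p 1 = p1) (hptilinit : ptil 1 = p1)
    (hprec : ∀ s : ℕ, 1 ≤ s →
      p (s + 1) = ENNReal.ofReal ρ • p s
        + ENNReal.ofReal (1 - ρ) • Measure.map (fun z => z + mv17 F (x s)) ν)
    (hptilrec : ∀ s : ℕ, 1 ≤ s →
      ptil (s + 1) = ENNReal.ofReal ρ • ptil s
        + ENNReal.ofReal (1 - ρ) • Measure.map (fun z => z + mv17 F (xtil s)) ν) :
    |(∫ z, l (x t) z ∂(p t)) - ∫ z, l (xtil t) z ∂(ptil t)|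
      ≤ L0 * ‖x t - xtil t‖
        + L0 * (1 - ρ) * spec17 F *
            ∑ k ∈ Finset.Icc 1 (t - 1), ρ ^ (k - 1) * ‖x (t - k) - xtil (t - k)‖ := by
  obtain ⟨hρ0, hρ1⟩ := hρ
  have hbound (y z) : |l y z| ≤ 1 := abs_le.2 ⟨by linarith [(hl01 y z).1], (hl01 y z).2⟩
  have hlip (y) : LipschitzWith L0.toNNReal (l y) :=
    .of_dist_le' fun z z' => by rw [Real.dist_eq, dist_eq_norm]; exact hlip2 y z z'
  subst hpinit
  have := isProbabilityMeasure_of_mix_map_add_rec hρ0.le hρ1.le hp1 hprec ht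
  have hdecision : |∫ z, l (x t) z ∂(p t) - ∫ z, l (xtil t) z ∂(p t)| ≤ L0 * ‖x t - xtil t‖ :=
    abs_integral_sub_integral_le ((hlip _).continuous.integrable_of_abs_le (hbound _) _)
      ((hlip _).continuous.integrable_of_abs_le (hbound _) _) fun z => hlip1 z _ _
  have hdistribution := (hlip (xtil t)).abs_integral_sub_le_of_mix_map_add_rec (hbound _)
    hρ0.le hρ1.le hp1 hptilinit hprec hptilrec ht
  calc _ ≤ |∫ z, l (x t) z ∂(p t) - ∫ z, l (xtil t) z ∂(p t)|
        + |∫ z, l (xtil t) z ∂(p t) - ∫ z, l (xtil t) z ∂(ptil t)| := abs_sub_le _ _ _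
    _ ≤ _ := by
      grw [hdecision, hdistribution, Real.coe_toNNReal _ hL0, Finset.mul_sum]
      refine add_le_add_right (Finset.sum_le_sum fun k _ => ?_) _
      calc _ ≤ ρ ^ (k - 1) * ((1 - ρ) * (L0 * (spec17 F * ‖x (t - k) - xtil (t - k)‖))) := by
            grw [norm_mv17_sub_le]
        _ = _ := by ring

/-- Lipschitz bound for online performative prediction.  Two decision
sequences `x, x̃` generate data distributions `p_t, p̃_t` from the same initial distribution via
`p_{s+1} = ρ p_s + (1−ρ) D(x_s)`, where `D(x)` is the pushforward of `ν` under `z ↦ z + Fx`.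
For a loss `l` that is `L₀`-Lipschitz in each argument and takes values in `[0,1]`,
`|E_{z∼p_t}[l(x_t,z)] − E_{z∼p̃_t}[l(x̃_t,z)]|
  ≤ L₀‖x_t − x̃_t‖ + L₀(1−ρ)‖F‖₂ ∑_{k=1}^{t−1} ρ^{k−1} ‖x_{t−k} − x̃_{t−k}‖`. -/
theorem stmt_17
    (d t : ℕ) (ht : 1 ≤ t) (ρ L0 : ℝ) (hρ : ρ ∈ Set.Ioo (0:ℝ) 1) (hL0 : 0 ≤ L0)
    (F : Matrix (Fin d) (Fin d) ℝ)
    (X : Set (EuclideanSpace ℝ (Fin d)))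
    (hXne : X.Nonempty) (hXclosed : IsClosed X) (hXconvex : Convex ℝ X)
    (ν p1 : Measure (EuclideanSpace ℝ (Fin d)))
    (hν : IsProbabilityMeasure ν) (hp1 : IsProbabilityMeasure p1)
    (hνint : Integrable (fun z => ‖z‖) ν) (hp1int : Integrable (fun z => ‖z‖) p1)
    (l : EuclideanSpace ℝ (Fin d) → EuclideanSpace ℝ (Fin d) → ℝ)
    (hl01 : ∀ x z, l x z ∈ Set.Icc (0:ℝ) 1)
    (hlip1 : ∀ z x x', |l x z - l x' z| ≤ L0 * ‖x - x'‖)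
    (hlip2 : ∀ x z z', |l x z - l x z'| ≤ L0 * ‖z - z'‖)
    (x xtil : ℕ → EuclideanSpace ℝ (Fin d)) (hx : ∀ s, x s ∈ X) (hxtil : ∀ s, xtil s ∈ X)
    (p ptil : ℕ → Measure (EuclideanSpace ℝ (Fin d)))
    (hpinit : p 1 = p1) (hptilinit : ptil 1 = p1)
    (hprec : ∀ s : ℕ, 1 ≤ s →
      p (s + 1) = ENNReal.ofReal ρ • p s
        + ENNReal.ofReal (1 - ρ) • Measure.map (fun z => z + mv17 F (x s)) ν)
    (hptilrec : ∀ s : ℕ, 1 ≤ s →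
      ptil (s + 1) = ENNReal.ofReal ρ • ptil s
        + ENNReal.ofReal (1 - ρ) • Measure.map (fun z => z + mv17 F (xtil s)) ν) :
    |(∫ z, l (x t) z ∂(p t)) - ∫ z, l (xtil t) z ∂(ptil t)|
      ≤ L0 * ‖x t - xtil t‖
        + L0 * (1 - ρ) * spec17 F *
            ∑ k ∈ Finset.Icc 1 (t - 1), ρ ^ (k - 1) * ‖x (t - k) - xtil (t - k)‖ :=
  stmt_17_general d t ht ρ L0 hρ hL0 F ν p1 hν hp1 l hl01 hlip1 hlip2 x xtil p ptil hpinit hptilinit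
    hprec hptilrec
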